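/- arXiv:2509.22160 — 5 statements merged into one kernel-verified Lean document; each statement's English description precedes it below -/
import Mathlib

section
/- Let G be a K_5-free graph with a linear vertex ordering, and let L assign to each vertex a subset of {1,2,3,4}. Suppose that for every triple x ≺ y ≺ z inducing the ordered pattern J (edges xy, xz, no edge yz) we have L(x) ∩ L(y) ∩ L(z) = ∅. Then every vertex v has at most 3 forward neighbors u (i.e., neighbors with v ≺ u) with i ∈ L(u), for each fixed color i ∈ L(v); consequently v has at most 12 forward neighbors u with L(u) ∩ L(v) ≠ ∅. -/
/-!
The forward neighbours of `v` whose lists contain a colour `i ∈ L(v)` are pairwise adjacent: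
two non-adjacent ones `y ≺ z` would form the pattern `J` with `v`, with `i` in all three lists.
Together with `v` they form a clique, so `K₅`-freeness leaves room for at most 3 of them.
Summing over the at most 4 colours of `L(v)` gives the bound 12.
-/

open Finset

namespace SimpleGraph

variable {V : Type*} {G : SimpleGraph V}

theorem IsClique.card_lt_of_cliqueFree_of_forall_adj {n : ℕ} {s : Finset V} {v : V}
    (hG : G.CliqueFree (n + 1)) (hs : G.IsClique (s : Set V)) (hv : ∀ u ∈ s, G.Adj v u) :
    #s < n := by
  classical
  by_contra! h
  obtain ⟨t, hts, rfl⟩ := exists_subset_card_eq h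
  exact hG _ (IsNClique.insert ⟨hs.subset (coe_subset.2 hts), rfl⟩ fun u hu => hv u (hts hu))

theorem isClique_forward_neighbors_of_mem [LinearOrder V] {α : Type*} [DecidableEq α]
    {L : V → Finset α}
    (hJ : ∀ x y z : V, x < y → y < z → G.Adj x y → G.Adj x z → ¬G.Adj y z →
      L x ∩ L y ∩ L z = ∅)
    {v : V} {i : α} (hi : i ∈ L v) :
    G.IsClique {u | G.Adj v u ∧ v < u ∧ i ∈ L u} := by
  intro y hy z hz hne
  wlog hyz : y < z generalizing y z with H
  · exact (H hz hy hne.symm (hne.lt_or_gt.resolve_left hyz)).symm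
  obtain ⟨hvy, hvy_lt, hiy⟩ := hy
  obtain ⟨hvz, -, hiz⟩ := hz
  by_contra hnadj
  have hmem : i ∈ L v ∩ L y ∩ L z := by simp [hi, hiy, hiz]
  simp [hJ v y z hvy_lt hyz hvy hvz hnadj] at hmem

end SimpleGraph

open SimpleGraph

/-- Let `G` be a `K₅`-free ordered graph and `L` a list assignment with colors in `{1,2,3,4}`
such that for every induced ordered pattern `J` (vertices `x ≺ y ≺ z` with edges `xy, xz` and
non-edge `yz`) the three lists have empty common intersection.  Then every vertex `v` has,
for each color `i ∈ L(v)`, at most 3 forward neighbors whose list contains `i`; consequently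
`v` has at most 12 forward neighbors whose list meets `L(v)`. -/
theorem forward_neighbors_bound {V : Type} [Fintype V] [LinearOrder V]
    (G : SimpleGraph V) [DecidableRel G.Adj]
    (hK5 : G.CliqueFree 5)
    (L : V → Finset (Fin 4))
    (hJ : ∀ x y z : V, x < y → y < z → G.Adj x y → G.Adj x z → ¬G.Adj y z →
      L x ∩ L y ∩ L z = ∅) :
    ∀ v : V,
      (∀ i ∈ L v,
        (Finset.univ.filter (fun u => G.Adj v u ∧ v < u ∧ i ∈ L u)).card ≤ 3) ∧
      (Finset.univ.filter (fun u => G.Adj v u ∧ v < u ∧ (L u ∩ L v).Nonempty)).card ≤ 12 := by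
  intro v
  have hcolor : ∀ i ∈ L v, #{u | G.Adj v u ∧ v < u ∧ i ∈ L u} ≤ 3 := fun i hi =>
    Nat.le_of_lt_succ <| IsClique.card_lt_of_cliqueFree_of_forall_adj hK5
      (by simpa using isClique_forward_neighbors_of_mem hJ hi)
      (fun u hu => (mem_filter.1 hu).2.1)
  have hcover : ({u | G.Adj v u ∧ v < u ∧ (L u ∩ L v).Nonempty} : Finset V) ⊆
      (L v).biUnion fun i => {u | G.Adj v u ∧ v < u ∧ i ∈ L u} := by
    intro u hu
    obtain ⟨hvu, hlt, i, hi⟩ := (mem_filter.1 hu).2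
    rw [mem_inter] at hi
    exact mem_biUnion.2 ⟨i, hi.2, mem_filter.2 ⟨mem_univ u, hvu, hlt, hi.1⟩⟩
  refine ⟨hcolor, ?_⟩
  calc #{u | G.Adj v u ∧ v < u ∧ (L u ∩ L v).Nonempty}
      ≤ #((L v).biUnion fun i => {u | G.Adj v u ∧ v < u ∧ i ∈ L u}) := card_le_card hcover
    _ ≤ #(L v) * 3 := card_biUnion_le_card_mul _ _ _ hcolor
    _ ≤ 4 * 3 := by gcongr; simpa using card_le_univ (L v)
end

section
/- Let F_1 and F_2 be ordered graphs, each containing no induced copy of the ordered rainbow pattern (four vertices v1 ≺ v2 ≺ v3 ≺ v4 with exactly the edges v1v4 and v2v3 among the pattern's edges). Suppose F is formed from disjoint copies of F_1 and F_2 by identifying the last ℓ' vertices of F_1 (an independent set) with the first ℓ' vertices of F_2 (an independent set), preserving order, and adding no other edges. Then F contains no induced copy of the rainbow pattern. -/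
/-! The outer edge `ad` of a rainbow lies inside `A` or inside `B`, since no edge joins `A \ B`
to `B \ A`. The order conditions make `A` a lower set and `B` an upper set, hence both
order-convex, so the inner vertices `b, c`, lying between `a` and `d`, follow them: the rainbow
is already induced on `A` or on `B`. -/

/-- The set `s` contains an induced copy of the ordered rainbow pattern `M`
(vertices `a ≺ b ≺ c ≺ d` with exactly the edges `ad` and `bc`). -/
def HasInducedRainbowOn {V : Type} [LinearOrder V] (F : SimpleGraph V) (s : Set V) : Prop :=
  ∃ a ∈ s, ∃ b ∈ s, ∃ c ∈ s, ∃ d ∈ s,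
    a < b ∧ b < c ∧ c < d ∧ F.Adj a d ∧ F.Adj b c ∧
    ¬F.Adj a b ∧ ¬F.Adj a c ∧ ¬F.Adj b d ∧ ¬F.Adj c d

theorem SimpleGraph.Adj.mem_and_mem_or_mem_and_mem {V : Type} {F : SimpleGraph V}
    {A B : Set V} (hcover : A ∪ B = Set.univ)
    (hnoedge : ∀ u ∈ A \ B, ∀ v ∈ B \ A, ¬F.Adj u v) {u v : V} (huv : F.Adj u v) :
    (u ∈ A ∧ v ∈ A) ∨ (u ∈ B ∧ v ∈ B) := by
  have hmem : ∀ x, x ∈ A ∨ x ∈ B := fun x => Set.eq_univ_iff_forall.mp hcover x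
  by_contra! h
  rcases hmem u with huA | huB
  · have hvB : v ∈ B := (hmem v).resolve_left (h.1 huA)
    exact hnoedge u ⟨huA, fun huB => h.2 huB hvB⟩ v ⟨hvB, h.1 huA⟩ huv
  · have hvA : v ∈ A := (hmem v).resolve_right (h.2 huB)
    exact hnoedge v ⟨hvA, h.2 huB⟩ u ⟨huB, fun huA => h.1 huA hvA⟩ huv.symm

section

variable {V : Type} [LinearOrder V] {F : SimpleGraph V} {s : Set V}

def IsInducedRainbow (F : SimpleGraph V) (a b c d : V) : Prop :=
  a < b ∧ b < c ∧ c < d ∧ F.Adj a d ∧ F.Adj b c ∧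
    ¬F.Adj a b ∧ ¬F.Adj a c ∧ ¬F.Adj b d ∧ ¬F.Adj c d

theorem IsInducedRainbow.hasInducedRainbowOn_of_ordConnected {a b c d : V}
    (h : IsInducedRainbow F a b c d) (hs : s.OrdConnected) (ha : a ∈ s) (hd : d ∈ s) :
    HasInducedRainbowOn F s :=
  have hb : b ∈ s := hs.out ha hd ⟨h.1.le, (h.2.1.trans h.2.2.1).le⟩
  have hc : c ∈ s := hs.out ha hd ⟨(h.1.trans h.2.1).le, h.2.2.1.le⟩
  ⟨a, ha, b, hb, c, hc, d, hd, h⟩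

theorem isLowerSet_of_forall_lt_of_notMem (h : ∀ u ∈ s, ∀ v ∉ s, u < v) : IsLowerSet s :=
  fun u v hvu hu => by_contra fun hv => (h u hu v hv).not_ge hvu

theorem isUpperSet_of_forall_lt_of_notMem (h : ∀ u ∉ s, ∀ v ∈ s, u < v) : IsUpperSet s :=
  fun u v huv hu => by_contra fun hv => (h v hv u hu).not_ge huv

end

theorem chaining_preserves_rainbow_free_general {V : Type} [LinearOrder V]
    (F : SimpleGraph V) (A B : Set V)
    (hcover : A ∪ B = Set.univ)
    (hnoedge : ∀ u ∈ A \ B, ∀ v ∈ B \ A, ¬F.Adj u v)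
    (horder1 : ∀ u ∈ A \ B, ∀ v ∈ B, u < v)
    (horder2 : ∀ u ∈ A, ∀ v ∈ B \ A, u < v)
    (hA : ¬ HasInducedRainbowOn F A)
    (hB : ¬ HasInducedRainbowOn F B) :
    ¬ HasInducedRainbowOn F Set.univ := by
  have hmem : ∀ x, x ∈ A ∨ x ∈ B := fun x => Set.eq_univ_iff_forall.mp hcover x
  have hAlower : IsLowerSet A := isLowerSet_of_forall_lt_of_notMem fun u hu v hv =>
    horder2 u hu v ⟨(hmem v).resolve_left hv, hv⟩
  have hBupper : IsUpperSet B := isUpperSet_of_forall_lt_of_notMem fun u hu v hv =>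
    horder1 u ⟨(hmem u).resolve_right hu, hu⟩ v hv
  rintro ⟨a, -, b, -, c, -, d, -, hrainbow⟩
  have hr : IsInducedRainbow F a b c d := hrainbow
  have had : F.Adj a d := hr.2.2.2.1
  rcases had.mem_and_mem_or_mem_and_mem hcover hnoedge with ⟨haA, hdA⟩ | ⟨haB, hdB⟩
  · exact hA (hr.hasInducedRainbowOn_of_ordConnected hAlower.ordConnected haA hdA)
  · exact hB (hr.hasInducedRainbowOn_of_ordConnected hBupper.ordConnected haB hdB)

/-- Chaining two rainbow-free links yields a rainbow-free ordered graph: if `F` is covered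
by `A` and `B`, with no edges between `A \ B` and `B \ A`, all of `A \ B` preceding `B`,
all of `A` preceding `B \ A`, the identified part `A ∩ B` independent, and the induced
ordered graphs on `A` and on `B` rainbow-free, then `F` is rainbow-free. -/
theorem chaining_preserves_rainbow_free {V : Type} [LinearOrder V]
    (F : SimpleGraph V) (A B : Set V)
    (hcover : A ∪ B = Set.univ)
    (hnoedge : ∀ u ∈ A \ B, ∀ v ∈ B \ A, ¬F.Adj u v)
    (horder1 : ∀ u ∈ A \ B, ∀ v ∈ B, u < v)
    (horder2 : ∀ u ∈ A, ∀ v ∈ B \ A, u < v)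
    (hindep : ∀ u ∈ A ∩ B, ∀ v ∈ A ∩ B, ¬F.Adj u v)
    (hA : ¬ HasInducedRainbowOn F A)
    (hB : ¬ HasInducedRainbowOn F B) :
    ¬ HasInducedRainbowOn F Set.univ :=
  chaining_preserves_rainbow_free_general F A B hcover hnoedge horder1 horder2 hA hB
end

section
/- Let G be a K_5-free graph with a linear vertex ordering that contains no induced copy of _ℓJ (ℓ isolated vertices followed by three vertices a ≺ b ≺ c with edges ab, ac only). Let v be a vertex and B'' an independent set of ℓ vertices preceding v and non-adjacent to v. If v has a set X of at least 4 forward neighbors, each non-adjacent to every vertex of B'', then X contains two non-adjacent vertices x, y, and B'' ∪ {v, x, y} induces a copy of _ℓJ — a contradiction. Formally: there is no such configuration, i.e., in such G a vertex v with an independent set B'' of ℓ non-neighbors preceding v cannot have 4 forward neighbors all non-adjacent to B''. -/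
theorem SimpleGraph.exists_ne_not_adj_of_cliqueFree {V : Type*} {G : SimpleGraph V} {n : ℕ}
    (hG : G.CliqueFree (n + 1)) {v : V} {X : Finset V} (hX : n ≤ X.card)
    (hvX : ∀ x ∈ X, G.Adj v x) : ∃ x ∈ X, ∃ y ∈ X, x ≠ y ∧ ¬G.Adj x y := by
  classical
  by_contra! hclique
  obtain ⟨S, hSX, hScard⟩ := Finset.exists_subset_card_eq hX
  have hS : G.IsNClique n S :=
    ⟨fun x hx y hy hxy => hclique x (hSX hx) y (hSX hy) hxy, hScard⟩
  exact hG _ (hS.insert fun x hx => hvX x (hSX hx))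

/-- In a `K₅`-free ordered graph with no induced copy of the pattern `_ℓJ`
(`ℓ` isolated vertices followed by `a ≺ b ≺ c` with exactly the edges `ab`, `ac`),
a vertex `v` with an independent set `B` of `ℓ` non-neighbors preceding it cannot have
a set `X` of at least 4 forward neighbors all non-adjacent to `B`. -/
theorem no_four_forward_neighbors {V : Type} [LinearOrder V]
    (G : SimpleGraph V) (ℓ : ℕ)
    (hK5 : G.CliqueFree 5)
    (hfree : ∀ (s : Finset V) (a b c : V), s.card = ℓ →
      (∀ w ∈ s, w < a) → a < b → b < c →
      (∀ w ∈ s, ∀ w' ∈ s, ¬G.Adj w w') →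
      (∀ w ∈ s, ¬G.Adj w a ∧ ¬G.Adj w b ∧ ¬G.Adj w c) →
      G.Adj a b → G.Adj a c → G.Adj b c)
    (v : V) (B X : Finset V)
    (hBcard : B.card = ℓ)
    (hBind : ∀ u ∈ B, ∀ w ∈ B, ¬G.Adj u w)
    (hBv : ∀ u ∈ B, u < v)
    (hBnadj : ∀ u ∈ B, ¬G.Adj u v)
    (hXcard : 4 ≤ X.card)
    (hXfwd : ∀ x ∈ X, G.Adj v x ∧ v < x)
    (hXB : ∀ x ∈ X, ∀ u ∈ B, ¬G.Adj x u) :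
    False := by
  have hXadj : ∀ x ∈ X, ∀ y ∈ X, x < y → G.Adj x y := fun x hx y hy hxy =>
    hfree B v x y hBcard hBv (hXfwd x hx).2 hxy hBind
      (fun u hu => ⟨hBnadj u hu, fun h => hXB x hx u hu h.symm, fun h => hXB y hy u hu h.symm⟩)
      (hXfwd x hx).1 (hXfwd y hy).1
  obtain ⟨x, hx, y, hy, hxy, hnadj⟩ :=
    G.exists_ne_not_adj_of_cliqueFree hK5 hXcard fun x hx => (hXfwd x hx).1
  rcases hxy.lt_or_gt with hlt | hlt
  · exact hnadj (hXadj x hx y hy hlt)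
  · exact hnadj (hXadj y hy x hx hlt).symm
end

section
/- Let G be the ordered graph from the NP-hardness construction: Z-vertices (each of degree 2 with adjacent neighborhood), followed by Y-vertices, followed by C-vertices (where each d_j comes after a_j, b_j, c_j and each of a_j,b_j,c_j has exactly one forward neighbor, namely d_j), followed by X-vertices; each Y-vertex's forward neighbors consist of one C-vertex and some X-vertices, and X-vertices have no forward neighbors. Then G contains no four vertices w1 ≺ w2 ≺ w3 ≺ w4 with edges exactly w1w2, w1w3 among all six pairs. -/
/-!
The apex `w1` of a copy of `J₁` has two forward neighbours `w2 ≺ w3` that are not adjacent.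
This rules out `w1 ∈ C ∪ X` (at most one forward neighbour) and `w1 ∈ Z` (its neighbourhood is
a clique). For `w1 ∈ Y`, uniqueness of the `C`-neighbour forces `w3 ∈ X`, hence `w4 ∈ X`, and
every `Y`-vertex is adjacent to all of `X`, contradicting `w1w4 ∉ E`.
-/

namespace SimpleGraph

variable {V : Type*} {G : SimpleGraph V}

theorem isClique_neighborSet_of_subset_pair {z a b : V} (hab : G.Adj a b)
    (hsub : ∀ u, G.Adj z u → u = a ∨ u = b) : G.IsClique (G.neighborSet z) :=
  (isClique_pair.2 fun _ => hab).subset fun u hu => by simpa using hsub u hu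

end SimpleGraph

section Layers

variable {V : Type*} [LinearOrder V] {G : SimpleGraph V} {Z Y C X : Set V}

theorem mem_X_of_forward_adj_of_forward_adj (hCX : ∀ c ∈ C, ∀ x ∈ X, c < x)
    {y u v : V} (hfwd : ∀ u : V, G.Adj y u → y < u → u ∈ C ∪ X)
    (hC : (C ∩ G.neighborSet y).Subsingleton) (hyu : y < u) (huv : u < v)
    (hu : G.Adj y u) (hv : G.Adj y v) : v ∈ X := by
  rcases hfwd v hv (hyu.trans huv) with hvC | hvX
  · rcases hfwd u hu hyu with huC | huX
    · exact absurd (hC ⟨huC, hu⟩ ⟨hvC, hv⟩) huv.ne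
    · exact absurd (hCX v hvC u huX) huv.not_gt
  · exact hvX

theorem mem_X_of_lt_of_mem_X
    (hpart : ∀ v : V, (v ∈ Z ∧ v ∉ Y ∧ v ∉ C ∧ v ∉ X) ∨ (v ∉ Z ∧ v ∈ Y ∧ v ∉ C ∧ v ∉ X) ∨
      (v ∉ Z ∧ v ∉ Y ∧ v ∈ C ∧ v ∉ X) ∨ (v ∉ Z ∧ v ∉ Y ∧ v ∉ C ∧ v ∈ X))
    (hZY : ∀ z ∈ Z, ∀ y ∈ Y, z < y) (hYC : ∀ y ∈ Y, ∀ c ∈ C, y < c)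
    (hCX : ∀ c ∈ C, ∀ x ∈ X, c < x) {y c x v : V} (hy : y ∈ Y) (hc : c ∈ C) (hx : x ∈ X)
    (hyv : y < v) (hxv : x < v) : v ∈ X := by
  rcases hpart v with ⟨hvZ, -⟩ | ⟨-, hvY, -⟩ | ⟨-, -, hvC, -⟩ | ⟨-, -, -, hvX⟩
  · exact absurd (hZY v hvZ y hy) hyv.not_gt
  · exact absurd ((hYC v hvY c hc).trans (hCX c hc x hx)) hxv.not_gt
  · exact absurd (hCX v hvC x hx) hxv.not_gt
  · exact hvX

end Layers

/-- The ordered graph of the NP-hardness construction, with vertex set partitioned into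
`Z ≺ Y ≺ C ≺ X`, each `Z`-vertex of degree 2 with adjacent neighbors, each `C ∪ X` vertex
with at most one forward neighbor, each `Y`-vertex having all forward neighbors in `C ∪ X`
with exactly one in `C`, and every `Y`-vertex adjacent to every `X`-vertex, contains no
induced copy of the ordered pattern `J₁` (four vertices `w1 ≺ w2 ≺ w3 ≺ w4` with edge set
exactly `{w1w2, w1w3}`). -/
theorem construction_J1_free {V : Type} [LinearOrder V]
    (G : SimpleGraph V) (Z Y C X : Set V)
    (hpart : ∀ v : V, (v ∈ Z ∧ v ∉ Y ∧ v ∉ C ∧ v ∉ X) ∨ (v ∉ Z ∧ v ∈ Y ∧ v ∉ C ∧ v ∉ X) ∨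
      (v ∉ Z ∧ v ∉ Y ∧ v ∈ C ∧ v ∉ X) ∨ (v ∉ Z ∧ v ∉ Y ∧ v ∉ C ∧ v ∈ X))
    (hZY : ∀ z ∈ Z, ∀ y ∈ Y, z < y)
    (hYC : ∀ y ∈ Y, ∀ c ∈ C, y < c)
    (hCX : ∀ c ∈ C, ∀ x ∈ X, c < x)
    (hCXfwd : ∀ v ∈ C ∪ X, ∀ u u' : V, G.Adj v u → v < u → G.Adj v u' → v < u' → u = u')
    (hZdeg : ∀ z ∈ Z, ∃ a b : V, a ≠ b ∧ G.Adj z a ∧ G.Adj z b ∧ G.Adj a b ∧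
      ∀ u : V, G.Adj z u → u = a ∨ u = b)
    (hYfwd : ∀ y ∈ Y, (∀ u : V, G.Adj y u → y < u → u ∈ C ∪ X) ∧
      (∃ c ∈ C, G.Adj y c ∧ ∀ c' ∈ C, G.Adj y c' → c' = c))
    (hYX : ∀ y ∈ Y, ∀ x ∈ X, G.Adj y x) :
    ¬ ∃ w1 w2 w3 w4 : V, w1 < w2 ∧ w2 < w3 ∧ w3 < w4 ∧
      G.Adj w1 w2 ∧ G.Adj w1 w3 ∧ ¬G.Adj w1 w4 ∧ ¬G.Adj w2 w3 ∧ ¬G.Adj w2 w4 ∧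
      ¬G.Adj w3 w4 := by
  rintro ⟨w1, w2, w3, w4, h12, h23, h34, a12, a13, na14, na23, -, -⟩
  have h13 := h12.trans h23
  rcases hpart w1 with ⟨hZ1, -⟩ | ⟨-, hY1, -⟩ | ⟨-, -, hC1, -⟩ | ⟨-, -, -, hX1⟩
  · obtain ⟨a, b, -, -, -, hab, hsub⟩ := hZdeg w1 hZ1
    exact na23 (G.isClique_neighborSet_of_subset_pair hab hsub a12 a13 h23.ne)
  · obtain ⟨hfwd, c, hc, -, hC⟩ := hYfwd w1 hY1
    have hX3 : w3 ∈ X := mem_X_of_forward_adj_of_forward_adj hCX hfwd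
      (fun _ h _ h' => (hC _ h.1 h.2).trans (hC _ h'.1 h'.2).symm) h12 h23 a12 a13
    have hX4 : w4 ∈ X := mem_X_of_lt_of_mem_X hpart hZY hYC hCX hY1 hc hX3 (h13.trans h34) h34
    exact na14 (hYX w1 hY1 w4 hX4)
  · exact h23.ne (hCXfwd w1 (Or.inl hC1) w2 w3 a12 h12 a13 h13)
  · exact h23.ne (hCXfwd w1 (Or.inr hX1) w2 w3 a12 h12 a13 h13)
end

section
/- Consider the 'NOT-11' subgadget: vertices p, q, u, w, z with lists L(p)=L(q)={1,2}, L(u)={1,3}, L(w)={1,4}, L(z)={3,4}, and edges pu, qw, uz, wz. A proper list coloring with given values c(p), c(q) ∈ {1,2} exists extending to u, w, z if and only if not both c(p)=1 and c(q)=1. -/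
/-! Colour `1` on `p` forces `u = 3`, colour `1` on `q` forces `w = 4`, and then `z` has no
colour left. If `p` avoids `1`, give `u` and `z` the colours `1, 3` and let `w` take whichever
of `1, 4` differs from `c(q)`; symmetrically if `q` avoids `1`. Only the distinctness of
`1, 3, 4` matters, so the argument is carried out for arbitrary distinct colours `a, b, c`. -/

namespace NotElevenGadget

variable {α : Type*} {a b c : α}

/-- `cp, cq` extend to a proper colouring of `u, w, z` from the lists `{a, b}`, `{a, c}`,
`{b, c}` along the edges `pu, qw, uz, wz`. -/
def Extends (a b c cp cq : α) : Prop :=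
  ∃ cu cw cz : α, (cu = a ∨ cu = b) ∧ (cw = a ∨ cw = c) ∧ (cz = b ∨ cz = c) ∧
    cp ≠ cu ∧ cq ≠ cw ∧ cu ≠ cz ∧ cw ≠ cz

theorem not_extends_same (a b c : α) : ¬Extends a b c a a := by
  rintro ⟨cu, cw, cz, rfl | rfl, rfl | rfl, rfl | rfl, hpu, hqw, huz, hwz⟩ <;> tauto

variable (hab : a ≠ b) (hac : a ≠ c) (hbc : b ≠ c)
include hab hac hbc

theorem extends_of_left_ne {cp : α} (hp : cp ≠ a) (cq : α) : Extends a b c cp cq := by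
  by_cases hq : cq = a
  · exact ⟨a, c, b, .inl rfl, .inr rfl, .inl rfl, hp, hq ▸ hac, hab, hbc.symm⟩
  · exact ⟨a, a, b, .inl rfl, .inl rfl, .inl rfl, hp, hq, hab, hab⟩

theorem extends_of_right_ne (cp : α) {cq : α} (hq : cq ≠ a) : Extends a b c cp cq := by
  by_cases hp : cp = a
  · exact ⟨b, a, c, .inr rfl, .inl rfl, .inr rfl, hp ▸ hab, hq, hbc, hac⟩
  · exact ⟨a, a, c, .inl rfl, .inl rfl, .inr rfl, hp, hq, hac, hac⟩

theorem extends_iff (cp cq : α) : Extends a b c cp cq ↔ ¬(cp = a ∧ cq = a) := by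
  refine ⟨fun h ⟨hp, hq⟩ => not_extends_same a b c (by rwa [hp, hq] at h), fun h => ?_⟩
  by_cases hp : cp = a
  · exact extends_of_right_ne hab hac hbc cp fun hq => h ⟨hp, hq⟩
  · exact extends_of_left_ne hab hac hbc hp cq

end NotElevenGadget

theorem not11_subgadget_general (cp cq : ℕ) :
    (∃ cu cw cz : ℕ, (cu = 1 ∨ cu = 3) ∧ (cw = 1 ∨ cw = 4) ∧ (cz = 3 ∨ cz = 4) ∧
      cp ≠ cu ∧ cq ≠ cw ∧ cu ≠ cz ∧ cw ≠ cz) ↔ ¬(cp = 1 ∧ cq = 1) :=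
  NotElevenGadget.extends_iff (by decide) (by decide) (by decide) cp cq

/-- The NOT-11 subgadget on vertices `p, q, u, w, z` (edges `pu, qw, uz, wz`; lists
`L(p)=L(q)={1,2}`, `L(u)={1,3}`, `L(w)={1,4}`, `L(z)={3,4}`): a partial proper list
coloring of `{p, q}` extends to the whole gadget if and only if not both `c(p)=1` and
`c(q)=1`. -/
theorem not11_subgadget (cp cq : ℕ)
    (hp : cp = 1 ∨ cp = 2) (hq : cq = 1 ∨ cq = 2) :
    (∃ cu cw cz : ℕ, (cu = 1 ∨ cu = 3) ∧ (cw = 1 ∨ cw = 4) ∧ (cz = 3 ∨ cz = 4) ∧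
      cp ≠ cu ∧ cq ≠ cw ∧ cu ≠ cz ∧ cw ≠ cz) ↔ ¬(cp = 1 ∧ cq = 1) :=
  not11_subgadget_general cp cq
end
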